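/- arXiv:1812.11259 — 2 statements merged into one kernel-verified Lean document; each statement's English description precedes it below -/
import Mathlib

section
/- Let μ be a *-distribution on ℂ⟨Z_l, Z_{l*}, Z_r, Z_{r*}⟩. If μ(Z_w) = 0 for every word w ∈ W⁺ that is not mixed alternating, then B_{χ_w}(Z_w) = 0 for every word w ∈ W⁺ that is not mixed alternating. -/
open scoped BigOperators

/-- Rank realizing the χ-order: left indices in increasing order, then right indices
in decreasing order. `true` stands for `l`, `false` for `r`. -/
def chiRank {n : ℕ} (χ : Fin n → Bool) (i : Fin n) : ℕ :=
  if χ i then (i : ℕ) else 2 * n - (i : ℕ)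

/-- The strict order `≺_χ`. -/
def chiLT {n : ℕ} (χ : Fin n → Bool) (i j : Fin n) : Prop :=
  chiRank χ i < chiRank χ j

/-- A finset is a χ-interval iff it is order-convex for `≺_χ`. -/
def IsChiInterval {n : ℕ} (χ : Fin n → Bool) (V : Finset (Fin n)) : Prop :=
  ∀ i j k : Fin n, i ∈ V → k ∈ V → chiLT χ i j → chiLT χ j k → j ∈ V

/-- A set partition of `{1, …, n}` encoded as a finset of (nonempty) blocks. -/
def IsPartition {n : ℕ} (P : Finset (Finset (Fin n))) : Prop :=
  (∅ ∉ P) ∧ ∀ i : Fin n, ∃! V : Finset (Fin n), V ∈ P ∧ i ∈ V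

open scoped Classical in
/-- The set of bi-interval partitions relative to χ. -/
noncomputable def BIset {n : ℕ} (χ : Fin n → Bool) : Finset (Finset (Finset (Fin n))) :=
  Finset.univ.filter (fun P => IsPartition P ∧ ∀ V ∈ P, IsChiInterval χ V)

/-- `φ_V(a₁,…,aₙ)`: apply φ to the product of the `a_i`, `i ∈ V`, in increasing index order. -/
def phiV {A : Type*} [Monoid A] (φ : A → ℂ) {n : ℕ} (a : Fin n → A) (V : Finset (Fin n)) : ℂ :=
  φ ((V.sort (· ≤ ·)).map a).prod

/-- The Boolean (l,r)-cumulant `B_χ`. -/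
noncomputable def Bcum {A : Type*} [Monoid A] (φ : A → ℂ) {n : ℕ} (χ : Fin n → Bool)
    (a : Fin n → A) : ℂ :=
  ∑ P ∈ BIset χ, (-1 : ℂ) ^ (P.card - 1) * ∏ V ∈ P, phiV φ a V

/-- The list of indices `1, …, n` sorted in the `≺_χ` order. -/
def chiSorted {n : ℕ} (χ : Fin n → Bool) : List (Fin n) :=
  (List.finRange n).mergeSort (fun i j => chiRank χ i ≤ chiRank χ j)

/-- Letters of the alphabet `{l, l*, r, r*}`: first component `true` = left (`l`-type),
second component `true` = starred. -/
abbrev Letter := Bool × Bool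

/-- The left/right shape of a word. -/
def chiW {n : ℕ} (w : Fin n → Letter) : Fin n → Bool := fun i => (w i).1

/-- The monomial `Z_w` in the free algebra on the four generators. -/
noncomputable def Zword {n : ℕ} (w : Fin n → Letter) : FreeAlgebra ℂ Letter :=
  (List.ofFn (fun i => FreeAlgebra.ι ℂ (w i))).prod

/-- The monomial `Z_{w|_V}`, the letters of `w` at positions in `V`,
multiplied in increasing index order. -/
noncomputable def ZwordOn {n : ℕ} (w : Fin n → Letter) (V : Finset (Fin n)) :
    FreeAlgebra ℂ Letter :=
  ((V.sort (· ≤ ·)).map (fun i => FreeAlgebra.ι ℂ (w i))).prod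

/-- The Boolean (l,r)-cumulant `B_{χ_w}(Z_w)` of a `*`-distribution `μ` at the word `w`. -/
noncomputable def BcumW (μ : FreeAlgebra ℂ Letter → ℂ) {n : ℕ} (w : Fin n → Letter) : ℂ :=
  Bcum μ (chiW w) (fun i => FreeAlgebra.ι ℂ (w i))

/-- The sequence of star-parities of the letters of `w`, rearranged in the `≺_{χ_w}` order. -/
def wordStarSeq {n : ℕ} (w : Fin n → Letter) : List Bool :=
  (chiSorted (chiW w)).map (fun i => (w i).2)

/-- A word is alternating: even length, and in the rearranged word starred and unstarred
letters alternate (all `l`-letters automatically precede all `r`-letters in the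
rearranged word). -/
def AlternatingW {n : ℕ} (w : Fin n → Letter) : Prop :=
  Even n ∧ (wordStarSeq w).Chain' (· ≠ ·)

/-- `chunks` is the canonical factorization of the rearranged word of `w`: a concatenation
of nonempty consecutive blocks, each of alternating shape (even length, star-parities
alternating), with the classes (star-parity of the first letter) of consecutive blocks
distinct. -/
def IsCanonFact {n : ℕ} (w : Fin n → Letter) (chunks : List (List (Fin n))) : Prop :=
  chunks.flatten = chiSorted (chiW w) ∧
  (∀ c ∈ chunks, c ≠ [] ∧ Even c.length ∧ (c.map (fun i => (w i).2)).Chain' (· ≠ ·)) ∧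
  chunks.Chain' (fun c c' =>
    (c.map (fun i => (w i).2)).head? ≠ (c'.map (fun i => (w i).2)).head?)

/-- A word is mixed alternating if its rearranged word admits a canonical factorization
into blocks of alternating shape with alternating classes. -/
def MixedAlternatingW {n : ℕ} (w : Fin n → Letter) : Prop :=
  ∃ chunks : List (List (Fin n)), IsCanonFact w chunks


/-!
For a bi-interval partition `π`, the rearranged word of `w` is the concatenation, block by
block in the order `≺_{χ_w}`, of the rearranged words of the restrictions `w|_V`, `V ∈ π`.
A word is mixed alternating exactly when its rearranged star-sequence cuts into consecutive
pairs of opposite star-parity (a block of class 1 is a run of pairs `(l, l*)`, one of class 2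
a run of pairs `(l*, l)`), and this property survives concatenation. So if `w` is not mixed
alternating, every `π ∈ BI(χ_w)` has a block `V` with `w|_V` not mixed alternating, whose
moment `μ(Z_{w|_V})` vanishes and kills the term of `π` in `B_{χ_w}(Z_w)`.
-/

section OppositePairs

variable {α β : Type*} (f : α → Bool)

inductive OppositePairs : List α → Prop
  | nil : OppositePairs []
  | cons {a b : α} {l : List α} : f a ≠ f b → OppositePairs l → OppositePairs (a :: b :: l)

variable {f}

theorem OppositePairs.append {l₁ l₂ : List α} (h₁ : OppositePairs f l₁)
    (h₂ : OppositePairs f l₂) : OppositePairs f (l₁ ++ l₂) := by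
  induction h₁ with
  | nil => exact h₂
  | cons hab _ ih => exact .cons hab ih

theorem OppositePairs.flatten {L : List (List α)} (h : ∀ l ∈ L, OppositePairs f l) :
    OppositePairs f L.flatten := by
  induction L with
  | nil => exact .nil
  | cons l L ih =>
    exact (h l List.mem_cons_self).append (ih fun l' hl' => h l' (List.mem_cons_of_mem _ hl'))

theorem OppositePairs.map {g : β → α} {l : List β} (h : OppositePairs (f ∘ g) l) :
    OppositePairs f (l.map g) := by
  induction h with
  | nil => exact .nil
  | cons hab _ ih => exact .cons hab ih

theorem oppositePairs_of_even_of_isChain :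
    ∀ {l : List α}, Even l.length → (l.map f).IsChain (· ≠ ·) → OppositePairs f l
  | [], _, _ => .nil
  | [_], heven, _ => absurd heven (by simp)
  | a :: b :: l, heven, hchain => by
    rw [List.map_cons, List.map_cons, List.isChain_cons_cons] at hchain
    exact .cons hchain.1
      (oppositePairs_of_even_of_isChain (by simpa [Nat.even_add_one] using heven) hchain.2.tail)

/-- A maximal run of equal pairs `(a, b)` is one chunk, of class `f a`. -/
theorem oppositePairs_iff_exists_chunks {l : List α} :
    OppositePairs f l ↔ ∃ chunks : List (List α), chunks.flatten = l ∧
      (∀ c ∈ chunks, c ≠ [] ∧ Even c.length ∧ (c.map f).IsChain (· ≠ ·)) ∧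
      chunks.IsChain (fun c c' => (c.map f).head? ≠ (c'.map f).head?) := by
  constructor
  · intro h
    induction h with
    | nil => exact ⟨[], rfl, by simp, .nil⟩
    | @cons a b l hab _ ih =>
      obtain ⟨chunks, rfl, hchunks, hchain⟩ := ih
      cases chunks with
      | nil => exact ⟨[[a, b]], rfl, by simp [hab], .singleton _⟩
      | cons d rest =>
        obtain ⟨d₀, d, rfl⟩ := List.exists_cons_of_ne_nil (hchunks _ List.mem_cons_self).1
        by_cases hhead : f d₀ = f a
        · refine ⟨(a :: b :: d₀ :: d) :: rest, by simp, ?_, ?_⟩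
          · simp only [List.forall_mem_cons] at hchunks ⊢
            obtain ⟨⟨-, heven, hd⟩, hrest⟩ := hchunks
            refine ⟨⟨by simp, by simpa [Nat.even_add_one] using heven, ?_⟩, hrest⟩
            simp only [List.map_cons, List.isChain_cons_cons] at hd ⊢
            exact ⟨hab, hhead ▸ hab.symm, hd⟩
          · cases rest with
            | nil => exact .singleton _
            | cons e rest =>
              simp only [List.isChain_cons_cons, List.map_cons,
                List.head?_cons] at hchain ⊢
              exact ⟨hhead ▸ hchain.1, hchain.2⟩
        · refine ⟨[a, b] :: (d₀ :: d) :: rest, by simp, ?_, ?_⟩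
          · simpa [hab] using hchunks
          · simp only [List.isChain_cons_cons, List.map_cons, List.head?_cons]
            exact ⟨fun h => hhead (Option.some.inj h).symm, hchain⟩
  · rintro ⟨chunks, rfl, hchunks, -⟩
    exact .flatten fun c hc =>
      oppositePairs_of_even_of_isChain (hchunks c hc).2.1 (hchunks c hc).2.2

end OppositePairs

namespace List

variable {α : Type*}

theorem filter_append_filter_not_of_pairwise {p : α → Bool} :
    ∀ {l : List α}, l.Pairwise (fun x y => p y → p x) → l.filter p ++ l.filter (!p ·) = l
  | [], _ => rfl
  | a :: t, hl => by
    rw [pairwise_cons] at hl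
    by_cases ha : p a
    · simp [ha, filter_append_filter_not_of_pairwise hl.2]
    · have ht : ∀ y ∈ t, ¬ p y := fun y hy hpy => ha (hl.1 y hy hpy)
      simpa [ha, filter_eq_nil_iff.2 ht] using ht

theorem of_forall_filter_mem_of_convex [DecidableEq α] {r : α → α → Prop} {S : List α → Prop}
    (nil : S []) (append : ∀ {l₁ l₂}, S l₁ → S l₂ → S (l₁ ++ l₂))
    {Q : Finset (Finset α)} (hdisj : (Q : Set (Finset α)).PairwiseDisjoint id)
    (hconvex : ∀ V ∈ Q, ∀ x y z, x ∈ V → z ∈ V → r x y → r y z → y ∈ V)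
    {l : List α} (hl : l.Pairwise r) (hcover : ∀ x ∈ l, ∃ V ∈ Q, x ∈ V)
    (hS : ∀ V ∈ Q, S (l.filter (· ∈ V))) : S l := by
  induction Q using Finset.strongInduction generalizing l with
  | H Q ih =>
  cases l with
  | nil => exact nil
  | cons a t =>
    obtain ⟨V, hV, haV⟩ := hcover a mem_cons_self
    have hprefix : (a :: t).Pairwise fun x y => decide (y ∈ V) → decide (x ∈ V) := by
      refine hl.imp_of_mem fun {x y} hx _ hxy hyV => ?_
      rcases mem_cons.1 hx with rfl | hx
      · simpa using haV
      · exact decide_eq_true (hconvex V hV a x y haV (by simpa using hyV)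
          ((pairwise_cons.1 hl).1 x hx) hxy)
    rw [← filter_append_filter_not_of_pairwise hprefix]
    refine append (hS V hV) (ih _ (Finset.erase_ssubset hV) (hdisj.subset (by simp))
      (fun W hW => hconvex W (Finset.mem_of_mem_erase hW)) (hl.filter _) ?_ ?_)
    · intro x hx
      rw [mem_filter] at hx
      obtain ⟨W, hW, hxW⟩ := hcover x hx.1
      exact ⟨W, Finset.mem_erase.2 ⟨by rintro rfl; simp_all, hW⟩, hxW⟩
    · intro W hW
      obtain ⟨hWV, hW⟩ := Finset.mem_erase.1 hW
      rw [filter_filter, filter_congr fun x _ => ?_]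
      · exact hS W hW
      by_cases hxW : x ∈ W
      · have hxV : x ∉ V := Finset.disjoint_left.1 (hdisj hW hV hWV) hxW
        simp [hxW, hxV]
      · simp [hxW]

end List

section ChiOrder

variable {n : ℕ} (χ : Fin n → Bool)

theorem chiLT_iff {i j : Fin n} :
    chiLT χ i j ↔ (χ i ∧ χ j ∧ i < j) ∨ (χ i ∧ ¬ χ j) ∨ (¬ χ i ∧ ¬ χ j ∧ j < i) := by
  have := i.isLt
  have := j.isLt
  unfold chiLT chiRank
  cases χ i <;> cases χ j <;> simp <;> omega

theorem chiLT_comp_orderEmbedding {m : ℕ} (e : Fin m ↪o Fin n) {i j : Fin m} :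
    chiLT (χ ∘ e) i j ↔ chiLT χ (e i) (e j) := by
  simp only [chiLT_iff, Function.comp, e.lt_iff_lt]

instance : Std.Irrefl (chiLT χ) := ⟨fun _ => lt_irrefl (α := ℕ) _⟩

instance : Std.Antisymm (chiLT χ) := ⟨fun _ _ h h' => absurd h' (lt_asymm h)⟩

theorem chiRank_injective : Function.Injective (chiRank χ) := by
  intro i j hij
  have := i.isLt
  have := j.isLt
  unfold chiRank at hij
  split_ifs at hij <;> (apply Fin.ext; omega)

theorem mem_chiSorted (i : Fin n) : i ∈ chiSorted χ :=
  (List.mergeSort_perm _ _).mem_iff.2 (List.mem_finRange i)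

theorem chiSorted_pairwise : (chiSorted χ).Pairwise (chiLT χ) := by
  have hle := List.pairwise_mergeSort
    (le := fun i j : Fin n => decide (chiRank χ i ≤ chiRank χ j))
    (by intro a b c h1 h2; simp only [decide_eq_true_eq] at *; omega)
    (by intro a b; simp only [Bool.or_eq_true, decide_eq_true_eq]; omega) (List.finRange n)
  have hnodup : (chiSorted χ).Nodup :=
    (List.mergeSort_perm _ _).nodup_iff.2 (List.nodup_finRange n)
  refine (hle.and hnodup).imp fun ⟨hij, hne⟩ => ?_
  exact lt_of_le_of_ne (by simpa using hij) ((chiRank_injective χ).ne hne)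

theorem map_chiSorted_orderEmbOfFin (V : Finset (Fin n)) :
    (chiSorted (χ ∘ V.orderEmbOfFin rfl)).map (V.orderEmbOfFin rfl) =
      (chiSorted χ).filter (· ∈ V) := by
  refine List.Pairwise.eq_of_mem_iff (r := chiLT χ) ?_ ((chiSorted_pairwise χ).filter _) ?_
  · exact List.pairwise_map.2
      ((chiSorted_pairwise _).imp (chiLT_comp_orderEmbedding χ _).1)
  · intro i
    simp [mem_chiSorted, ← Set.mem_range, Finset.range_orderEmbOfFin]

end ChiOrder

section Words

variable {n : ℕ}

open scoped Classical in
theorem mem_BIset {χ : Fin n → Bool} {P : Finset (Finset (Fin n))} :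
    P ∈ BIset χ ↔ IsPartition P ∧ ∀ V ∈ P, IsChiInterval χ V :=
  Finset.mem_filter.trans (and_iff_right (Finset.mem_univ _))

theorem mixedAlternatingW_iff_oppositePairs (w : Fin n → Letter) :
    MixedAlternatingW w ↔ OppositePairs (fun i => (w i).2) (chiSorted (chiW w)) :=
  oppositePairs_iff_exists_chunks.symm

def wordRestrict (w : Fin n → Letter) (V : Finset (Fin n)) : Fin V.card → Letter :=
  w ∘ V.orderEmbOfFin rfl

theorem phiV_eq_apply_Zword_wordRestrict (μ : FreeAlgebra ℂ Letter → ℂ) (w : Fin n → Letter)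
    (V : Finset (Fin n)) :
    phiV μ (fun i => FreeAlgebra.ι ℂ (w i)) V = μ (Zword (wordRestrict w V)) := by
  have hsort : V.sort (· ≤ ·) = List.ofFn (V.orderEmbOfFin rfl) :=
    List.ext_getElem (by simp) fun i _ _ => by simp [Finset.orderEmbOfFin_apply]
  rw [phiV, Zword, hsort, List.map_ofFn]
  rfl

theorem MixedAlternatingW.oppositePairs_filter {w : Fin n → Letter} {V : Finset (Fin n)}
    (h : MixedAlternatingW (wordRestrict w V)) :
    OppositePairs (fun i => (w i).2) ((chiSorted (chiW w)).filter (· ∈ V)) := by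
  rw [← map_chiSorted_orderEmbOfFin]
  exact .map (g := V.orderEmbOfFin rfl) ((mixedAlternatingW_iff_oppositePairs _).1 h)

theorem mixedAlternatingW_of_forall_mem_BIset {w : Fin n → Letter}
    {P : Finset (Finset (Fin n))} (hP : P ∈ BIset (chiW w))
    (h : ∀ V ∈ P, MixedAlternatingW (wordRestrict w V)) : MixedAlternatingW w := by
  obtain ⟨⟨-, hunique⟩, hconvex⟩ := mem_BIset.1 hP
  rw [mixedAlternatingW_iff_oppositePairs]
  have hdisj : (P : Set (Finset (Fin n))).PairwiseDisjoint id :=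
    fun V hV W hW hVW => Finset.disjoint_left.2 fun x hxV hxW =>
      hVW ((hunique x).unique ⟨hV, hxV⟩ ⟨hW, hxW⟩)
  exact List.of_forall_filter_mem_of_convex .nil .append hdisj hconvex (chiSorted_pairwise _)
    (fun x _ => (hunique x).exists) fun V hV => (h V hV).oppositePairs_filter

theorem card_pos_of_mem_BIset {χ : Fin n → Bool} {P : Finset (Finset (Fin n))}
    (hP : P ∈ BIset χ) {V : Finset (Fin n)} (hV : V ∈ P) : 0 < V.card := by
  obtain ⟨⟨hempty, -⟩, -⟩ := mem_BIset.1 hP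
  exact Finset.card_pos.2 (Finset.nonempty_iff_ne_empty.2 fun h => hempty (h ▸ hV))

end Words

theorem Bcum_eq_zero_of_forall_mem_BIset {A : Type*} [Monoid A] (φ : A → ℂ) {n : ℕ}
    (χ : Fin n → Bool) (a : Fin n → A) (h : ∀ P ∈ BIset χ, ∃ V ∈ P, phiV φ a V = 0) :
    Bcum φ χ a = 0 :=
  Finset.sum_eq_zero fun P hP => by
    obtain ⟨V, hV, hzero⟩ := h P hP
    rw [Finset.prod_eq_zero hV hzero, mul_zero]

theorem cumulants_vanish_of_moments_vanish_general
    (μ : FreeAlgebra ℂ Letter →ₗ[ℂ] ℂ)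
    (h : ∀ n : ℕ, 1 ≤ n → ∀ w : Fin n → Letter,
      ¬ MixedAlternatingW w → μ (Zword w) = 0) :
    ∀ n : ℕ, 1 ≤ n → ∀ w : Fin n → Letter,
      ¬ MixedAlternatingW w → BcumW (fun z => μ z) w = 0 := by
  intro n _ w hw
  refine Bcum_eq_zero_of_forall_mem_BIset _ _ _ fun P hP => ?_
  by_contra! hne
  refine hw (mixedAlternatingW_of_forall_mem_BIset hP fun V hV => ?_)
  by_contra hV'
  refine hne V hV ?_
  rw [phiV_eq_apply_Zword_wordRestrict]
  exact h _ (card_pos_of_mem_BIset hP hV) _ hV'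

/-- If all moments of a `*`-distribution at non-mixed-alternating words vanish, then
all its Boolean (l,r)-cumulants at non-mixed-alternating words vanish. -/
theorem cumulants_vanish_of_moments_vanish
    (μ : FreeAlgebra ℂ Letter →ₗ[ℂ] ℂ) (hμ1 : μ 1 = 1)
    (h : ∀ n : ℕ, 1 ≤ n → ∀ w : Fin n → Letter,
      ¬ MixedAlternatingW w → μ (Zword w) = 0) :
    ∀ n : ℕ, 1 ≤ n → ∀ w : Fin n → Letter,
      ¬ MixedAlternatingW w → BcumW (fun z => μ z) w = 0 :=
  cumulants_vanish_of_moments_vanish_general μ h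
end

section
/- Let μ and ν be *-distributions on ℂ⟨Z_l, Z_{l*}, Z_r, Z_{r*}⟩ satisfying: (1) μ(Z_w) = ν(Z_w) = 0 for every w ∈ W⁺ that is not mixed alternating; (2) for every mixed alternating word w with canonical factorization determining the bi-interval partition π_w = {J₁, …, J_d}, one has μ(Z_w) = μ(Z_{w|_{J₁}}) ⋯ μ(Z_{w|_{J_d}}) and ν(Z_w) = ν(Z_{w|_{J₁}}) ⋯ ν(Z_{w|_{J_d}}); (3) B^{(μ)}_{χ_w}(Z_w) = B^{(ν)}_{χ_w}(Z_w) for every alternating word w ∈ W⁺, where B^{(μ)} and B^{(ν)} denote the Boolean (l,r)-cumulants of μ and ν. Then μ(Z_w) = ν(Z_w) for all w ∈ W⁺, i.e., μ = ν. -/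
open scoped BigOperators

/-
Induction on the length of `w`. Off mixed alternating words both moments vanish;
a mixed alternating word with at least two blocks in its canonical factorization has its
moment factorized into moments of strictly shorter words; a word with a single block is
alternating, and in its Boolean cumulant every bi-interval partition other than the
one-block partition only involves moments of shorter words, so the equality of cumulants
forces the equality of the top moments. Finally, the monomials `Z_w` form a basis of the
free algebra.
-/

open Finset

theorem FreeAlgebra.basisFreeMonoid_eq_lift {R X : Type*} [CommSemiring R] (x : FreeMonoid X) :
    FreeAlgebra.basisFreeMonoid R X x = FreeMonoid.lift (FreeAlgebra.ι R) x := by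
  simp [FreeAlgebra.basisFreeMonoid, FreeAlgebra.equivMonoidAlgebraFreeMonoid,
    AlgEquiv.ofAlgHom]

section Partitions

variable {n : ℕ}

theorem singleton_univ_mem_BIset (hn : 1 ≤ n) (χ : Fin n → Bool) :
    ({univ} : Finset (Finset (Fin n))) ∈ BIset χ := by
  classical
  have : Nonempty (Fin n) := ⟨⟨0, hn⟩⟩
  rw [BIset, mem_filter]
  simp only [mem_univ, true_and, IsPartition, mem_singleton]
  refine ⟨⟨fun h => univ_nonempty.ne_empty h.symm, fun i => ⟨univ, by simp, fun V hV => hV.1⟩⟩,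
    fun V hV _ j _ _ _ _ _ => hV ▸ mem_univ j⟩

theorem IsPartition.card_lt_of_ne_singleton_univ {P : Finset (Finset (Fin n))}
    (hP : IsPartition P) (hne : P ≠ {univ}) {V : Finset (Fin n)} (hV : V ∈ P) : V.card < n := by
  refine lt_of_le_of_ne (by simpa using card_le_univ V) fun hcard => hne ?_
  have hVuniv : V = univ := eq_univ_of_card V (by simpa using hcard)
  subst hVuniv
  refine eq_singleton_iff_unique_mem.mpr ⟨hV, fun W hW => ?_⟩
  obtain ⟨i, hi⟩ := nonempty_iff_ne_empty.mpr fun h => hP.1 (h ▸ hW)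
  obtain ⟨_, _, huniq⟩ := hP.2 i
  exact (huniq W ⟨hW, hi⟩).trans (huniq univ ⟨hV, mem_univ i⟩).symm

end Partitions

theorem phiV_univ {A : Type*} [Monoid A] (φ : A → ℂ) {n : ℕ} (a : Fin n → A) :
    phiV φ a univ = φ (List.ofFn a).prod := by
  rw [phiV, Fin.sort_univ, ← List.ofFn_eq_map]

/-- Boolean cumulants are unitriangular in the moments: the one-block partition contributes
the top moment, every other bi-interval partition only proper blocks. -/
theorem map_prod_eq_of_Bcum_eq {A : Type*} [Monoid A] {φ ψ : A → ℂ} {n : ℕ} (hn : 1 ≤ n)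
    (χ : Fin n → Bool) (a : Fin n → A) (hB : Bcum φ χ a = Bcum ψ χ a)
    (hproper : ∀ V : Finset (Fin n), V.card < n → phiV φ a V = phiV ψ a V) :
    φ (List.ofFn a).prod = ψ (List.ofFn a).prod := by
  classical
  have hsum : ∑ P ∈ (BIset χ).erase {univ}, (-1 : ℂ) ^ (P.card - 1) * ∏ V ∈ P, phiV φ a V =
      ∑ P ∈ (BIset χ).erase {univ}, (-1 : ℂ) ^ (P.card - 1) * ∏ V ∈ P, phiV ψ a V := by
    refine sum_congr rfl fun P hP => ?_
    obtain ⟨hne, hPmem⟩ := mem_erase.mp hP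
    have hPpart : IsPartition P := (mem_filter.mp hPmem).2.1
    exact congrArg _ (prod_congr rfl fun V hV =>
      hproper V (hPpart.card_lt_of_ne_singleton_univ hne hV))
  have hmem := singleton_univ_mem_BIset hn χ
  rw [Bcum, Bcum, ← add_sum_erase _ _ hmem, ← add_sum_erase _ _ hmem, hsum] at hB
  simpa [phiV_univ] using hB

theorem list_prod_map_ι_eq_Zword (l : List Letter) :
    (l.map (FreeAlgebra.ι ℂ)).prod = Zword (fun i : Fin l.length => l[i]) :=
  congrArg List.prod (List.ofFn_getElem_eq_map l _).symm

theorem ZwordOn_eq_Zword {n : ℕ} (w : Fin n → Letter) (V : Finset (Fin n)) :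
    ZwordOn w V = Zword (fun i : Fin ((V.sort (· ≤ ·)).map w).length =>
      ((V.sort (· ≤ ·)).map w)[i]) := by
  rw [← list_prod_map_ι_eq_Zword, List.map_map]
  rfl

namespace IsCanonFact

variable {n : ℕ} {w : Fin n → Letter} {chunks : List (List (Fin n))}

theorem sum_length (h : IsCanonFact w chunks) : (chunks.map List.length).sum = n := by
  rw [← List.length_flatten, h.1, chiSorted, List.length_mergeSort, List.length_finRange]

theorem alternatingW {c : List (Fin n)} (h : IsCanonFact w [c]) : AlternatingW w := by
  obtain ⟨-, heven, hchain⟩ := h.2.1 c (List.mem_singleton_self c)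
  have hc : c = chiSorted (chiW w) := by simpa using h.1
  refine ⟨?_, by rwa [wordStarSeq, ← hc]⟩
  simpa [← h.sum_length] using heven

theorem card_lt (h : IsCanonFact w chunks) (hlen : 2 ≤ chunks.length) {c : List (Fin n)}
    (hc : c ∈ chunks) : c.toFinset.card < n := by
  classical
  set l := chunks.map List.length
  have hpos : ∀ k ∈ l, 1 ≤ k := by
    simp only [l, List.mem_map]
    rintro _ ⟨c', hc', rfl⟩
    exact List.length_pos_iff.mpr (h.2.1 c' hc').1
  have hcl : c.length ∈ l := List.mem_map_of_mem hc
  have hrest_len : 1 ≤ (l.erase c.length).length := by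
    rw [List.length_erase_of_mem hcl, List.length_map]
    omega
  have hrest_sum := (l.erase c.length).length_le_sum_of_one_le fun k hk =>
    hpos k (List.mem_of_mem_erase hk)
  have hsplit := List.sum_erase hcl
  have hcard := List.toFinset_card_le c
  have hsum : l.sum = n := h.sum_length
  omega

end IsCanonFact

theorem map_Zword_eq_of_map_ZwordOn_eq {μ ν : FreeAlgebra ℂ Letter → ℂ} {n : ℕ} (hn : 1 ≤ n)
    (w : Fin n → Letter)
    (hvanish : ¬ MixedAlternatingW w → μ (Zword w) = 0 ∧ ν (Zword w) = 0)
    (hfactor : ∀ chunks : List (List (Fin n)), IsCanonFact w chunks →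
      μ (Zword w) = (chunks.map (fun c => μ (ZwordOn w c.toFinset))).prod ∧
      ν (Zword w) = (chunks.map (fun c => ν (ZwordOn w c.toFinset))).prod)
    (hcum : AlternatingW w → BcumW μ w = BcumW ν w)
    (hshorter : ∀ V : Finset (Fin n), V.card < n → μ (ZwordOn w V) = ν (ZwordOn w V)) :
    μ (Zword w) = ν (Zword w) := by
  by_cases hmixed : MixedAlternatingW w
  swap
  · rw [(hvanish hmixed).1, (hvanish hmixed).2]
  obtain ⟨chunks, hfact⟩ := hmixed
  rcases chunks with _ | ⟨c, _ | ⟨_, _⟩⟩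
  · have hn0 : 0 = n := by simpa using hfact.sum_length
    omega
  · exact map_prod_eq_of_Bcum_eq hn _ _ (hcum hfact.alternatingW) hshorter
  · rw [(hfactor _ hfact).1, (hfactor _ hfact).2]
    exact congrArg _ (List.map_congr_left fun c hc =>
      hshorter _ (hfact.card_lt (by simp) hc))

/-- Two `*`-distributions that vanish off mixed alternating words, factorize over the
canonical factorization of mixed alternating words, and have the same Boolean
(l,r)-cumulants at alternating words, are equal. -/
theorem dist_eq_of_same_alternating_cumulants
    (μ ν : FreeAlgebra ℂ Letter →ₗ[ℂ] ℂ) (hμ1 : μ 1 = 1) (hν1 : ν 1 = 1)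
    (h1 : ∀ n : ℕ, 1 ≤ n → ∀ w : Fin n → Letter, ¬ MixedAlternatingW w →
      μ (Zword w) = 0 ∧ ν (Zword w) = 0)
    (h2 : ∀ n : ℕ, 1 ≤ n → ∀ w : Fin n → Letter, ∀ chunks : List (List (Fin n)),
      IsCanonFact w chunks →
        μ (Zword w) = (chunks.map (fun c => μ (ZwordOn w c.toFinset))).prod ∧
        ν (Zword w) = (chunks.map (fun c => ν (ZwordOn w c.toFinset))).prod)
    (h3 : ∀ n : ℕ, 1 ≤ n → ∀ w : Fin n → Letter, AlternatingW w →
      BcumW (fun z => μ z) w = BcumW (fun z => ν z) w) :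
    μ = ν := by
  have moments : ∀ n (w : Fin n → Letter), μ (Zword w) = ν (Zword w) := by
    intro n
    induction n using Nat.strong_induction_on with
    | _ n IH =>
    intro w
    rcases Nat.eq_zero_or_pos n with rfl | hn
    · simp [Zword, hμ1, hν1]
    refine map_Zword_eq_of_map_ZwordOn_eq hn w (h1 n hn w) (h2 n hn w) (h3 n hn w)
      fun V hV => ?_
    rw [ZwordOn_eq_Zword]
    exact IH _ (by simpa using hV) _
  refine (FreeAlgebra.basisFreeMonoid ℂ Letter).ext fun x => ?_
  rw [FreeAlgebra.basisFreeMonoid_eq_lift, FreeMonoid.lift_apply, list_prod_map_ι_eq_Zword]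
  exact moments _ _
end
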